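/- For every finite word w over {0,1,2} and every j in {0,1,2}: (1/5)(b_j^(w) - 1/3) = (1/4)( (1,1,1) M_{wj} (2,2,2)^T / ((1,1,1) M_w (2,2,2)^T) - 1/3 ), where wj denotes the word w with the letter j appended; both denominators are positive. -/
import Mathlib


open Matrix BigOperators

/-- The matrix `M_0`. -/
noncomputable def M0 : Matrix (Fin 3) (Fin 3) ℝ :=
  (1 / 15 : ℝ) • !![9, 0, 0; 2, 2, -1; 2, -1, 2]

/-- The matrix `M_1`. -/
noncomputable def M1 : Matrix (Fin 3) (Fin 3) ℝ :=
  (1 / 15 : ℝ) • !![2, 2, -1; 0, 9, 0; -1, 2, 2]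

/-- The matrix `M_2`. -/
noncomputable def M2 : Matrix (Fin 3) (Fin 3) ℝ :=
  (1 / 15 : ℝ) • !![2, -1, 2; -1, 2, 2; 0, 0, 9]

/-- `Mmat i` is the matrix `M_i`. -/
noncomputable def Mmat : Fin 3 → Matrix (Fin 3) (Fin 3) ℝ := ![M0, M1, M2]

/-- For a word `w = [w₁, ..., wₘ]`, `Mword w = M_{w₁} * ⋯ * M_{wₘ}`
(the empty word giving the identity matrix). -/
noncomputable def Mword (w : List (Fin 3)) : Matrix (Fin 3) (Fin 3) ℝ :=
  (w.map Mmat).prod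

/-- The `j`-th column `z_j` of `M_w`, as a vector in `ℝ³`. -/
noncomputable def zcol (w : List (Fin 3)) (j : Fin 3) : Fin 3 → ℝ :=
  fun i => Mword w i j

/-- The vector `z = z₀ + z₁ + z₂`, the sum of the columns of `M_w`. -/
noncomputable def zvec (w : List (Fin 3)) : Fin 3 → ℝ :=
  fun i => ∑ j : Fin 3, Mword w i j

/-- `c_j^(w)`, the `j`-th column sum of `M_w`, i.e. the `j`-th entry of `(1,1,1) M_w`. -/
noncomputable def cw (w : List (Fin 3)) (j : Fin 3) : ℝ :=
  ∑ i : Fin 3, Mword w i j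

/-- `S^(w) = c₀^(w) + c₁^(w) + c₂^(w)`, the sum of all entries of `M_w`. -/
noncomputable def Sw (w : List (Fin 3)) : ℝ :=
  ∑ j : Fin 3, cw w j

/-- The weight `b_j^(w) = 1/6 + c_j^(w) / (2 S^(w))`. -/
noncomputable def bwt (w : List (Fin 3)) (j : Fin 3) : ℝ :=
  1 / 6 + cw w j / (2 * Sw w)

lemma fin3_cases (j : Fin 3) : j = 0 ∨ j = 1 ∨ j = 2 := by
  fin_cases j
  · exact Or.inl rfl
  · exact Or.inr (Or.inl rfl)
  · exact Or.inr (Or.inr rfl)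

lemma mword_append (w : List (Fin 3)) (j : Fin 3) :
    Mword (w ++ [j]) = Mword w * Mmat j := by
  simp [Mword]

lemma cw_append (w : List (Fin 3)) (j k : Fin 3) :
    cw (w ++ [j]) k = cw w 0 * Mmat j 0 k + cw w 1 * Mmat j 1 k + cw w 2 * Mmat j 2 k := by
  simp [cw, mword_append, Matrix.mul_apply, Fin.sum_univ_three]
  ring

lemma sw_eq (w : List (Fin 3)) : Sw w = cw w 0 + cw w 1 + cw w 2 := by
  simp [Sw, Fin.sum_univ_three]

lemma cw0 (w : List (Fin 3)) :
    cw (w ++ [0]) 0 = (9 * cw w 0 + 2 * cw w 1 + 2 * cw w 2) / 15 ∧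
    cw (w ++ [0]) 1 = (2 * cw w 1 - cw w 2) / 15 ∧
    cw (w ++ [0]) 2 = (- cw w 1 + 2 * cw w 2) / 15 := by
  have e00 : Mmat 0 0 0 = (9 : ℝ)/15 := by
    norm_num [Mmat, M0, Matrix.cons_val_zero, Matrix.cons_val_one, Matrix.head_cons, Matrix.cons_val_two, Matrix.tail_cons, Matrix.smul_apply, Matrix.vecHead, Matrix.vecTail, Function.comp]
  have e01 : Mmat 0 0 1 = (0 : ℝ)/15 := by
    norm_num [Mmat, M0, Matrix.cons_val_zero, Matrix.cons_val_one, Matrix.head_cons, Matrix.cons_val_two, Matrix.tail_cons, Matrix.smul_apply, Matrix.vecHead, Matrix.vecTail, Function.comp]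
  have e02 : Mmat 0 0 2 = (0 : ℝ)/15 := by
    norm_num [Mmat, M0, Matrix.cons_val_zero, Matrix.cons_val_one, Matrix.head_cons, Matrix.cons_val_two, Matrix.tail_cons, Matrix.smul_apply, Matrix.vecHead, Matrix.vecTail, Function.comp]
  have e10 : Mmat 0 1 0 = (2 : ℝ)/15 := by
    norm_num [Mmat, M0, Matrix.cons_val_zero, Matrix.cons_val_one, Matrix.head_cons, Matrix.cons_val_two, Matrix.tail_cons, Matrix.smul_apply, Matrix.vecHead, Matrix.vecTail, Function.comp]
  have e11 : Mmat 0 1 1 = (2 : ℝ)/15 := by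
    norm_num [Mmat, M0, Matrix.cons_val_zero, Matrix.cons_val_one, Matrix.head_cons, Matrix.cons_val_two, Matrix.tail_cons, Matrix.smul_apply, Matrix.vecHead, Matrix.vecTail, Function.comp]
  have e12 : Mmat 0 1 2 = ((-1 : ℝ))/15 := by
    norm_num [Mmat, M0, Matrix.cons_val_zero, Matrix.cons_val_one, Matrix.head_cons, Matrix.cons_val_two, Matrix.tail_cons, Matrix.smul_apply, Matrix.vecHead, Matrix.vecTail, Function.comp]
  have e20 : Mmat 0 2 0 = (2 : ℝ)/15 := by
    norm_num [Mmat, M0, Matrix.cons_val_zero, Matrix.cons_val_one, Matrix.head_cons, Matrix.cons_val_two, Matrix.tail_cons, Matrix.smul_apply, Matrix.vecHead, Matrix.vecTail, Function.comp]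
  have e21 : Mmat 0 2 1 = ((-1 : ℝ))/15 := by
    norm_num [Mmat, M0, Matrix.cons_val_zero, Matrix.cons_val_one, Matrix.head_cons, Matrix.cons_val_two, Matrix.tail_cons, Matrix.smul_apply, Matrix.vecHead, Matrix.vecTail, Function.comp]
  have e22 : Mmat 0 2 2 = (2 : ℝ)/15 := by
    norm_num [Mmat, M0, Matrix.cons_val_zero, Matrix.cons_val_one, Matrix.head_cons, Matrix.cons_val_two, Matrix.tail_cons, Matrix.smul_apply, Matrix.vecHead, Matrix.vecTail, Function.comp]
  refine ⟨?_, ?_, ?_⟩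
  · rw [cw_append, e00, e10, e20]; ring
  · rw [cw_append, e01, e11, e21]; ring
  · rw [cw_append, e02, e12, e22]; ring

lemma cw1 (w : List (Fin 3)) :
    cw (w ++ [1]) 0 = (2 * cw w 0 - cw w 2) / 15 ∧
    cw (w ++ [1]) 1 = (2 * cw w 0 + 9 * cw w 1 + 2 * cw w 2) / 15 ∧
    cw (w ++ [1]) 2 = (- cw w 0 + 2 * cw w 2) / 15 := by
  have e00 : Mmat 1 0 0 = (2 : ℝ)/15 := by
    norm_num [Mmat, M1, Matrix.cons_val_zero, Matrix.cons_val_one, Matrix.head_cons, Matrix.cons_val_two, Matrix.tail_cons, Matrix.smul_apply, Matrix.vecHead, Matrix.vecTail, Function.comp]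
  have e01 : Mmat 1 0 1 = (2 : ℝ)/15 := by
    norm_num [Mmat, M1, Matrix.cons_val_zero, Matrix.cons_val_one, Matrix.head_cons, Matrix.cons_val_two, Matrix.tail_cons, Matrix.smul_apply, Matrix.vecHead, Matrix.vecTail, Function.comp]
  have e02 : Mmat 1 0 2 = ((-1 : ℝ))/15 := by
    norm_num [Mmat, M1, Matrix.cons_val_zero, Matrix.cons_val_one, Matrix.head_cons, Matrix.cons_val_two, Matrix.tail_cons, Matrix.smul_apply, Matrix.vecHead, Matrix.vecTail, Function.comp]
  have e10 : Mmat 1 1 0 = (0 : ℝ)/15 := by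
    norm_num [Mmat, M1, Matrix.cons_val_zero, Matrix.cons_val_one, Matrix.head_cons, Matrix.cons_val_two, Matrix.tail_cons, Matrix.smul_apply, Matrix.vecHead, Matrix.vecTail, Function.comp]
  have e11 : Mmat 1 1 1 = (9 : ℝ)/15 := by
    norm_num [Mmat, M1, Matrix.cons_val_zero, Matrix.cons_val_one, Matrix.head_cons, Matrix.cons_val_two, Matrix.tail_cons, Matrix.smul_apply, Matrix.vecHead, Matrix.vecTail, Function.comp]
  have e12 : Mmat 1 1 2 = (0 : ℝ)/15 := by
    norm_num [Mmat, M1, Matrix.cons_val_zero, Matrix.cons_val_one, Matrix.head_cons, Matrix.cons_val_two, Matrix.tail_cons, Matrix.smul_apply, Matrix.vecHead, Matrix.vecTail, Function.comp]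
  have e20 : Mmat 1 2 0 = ((-1 : ℝ))/15 := by
    norm_num [Mmat, M1, Matrix.cons_val_zero, Matrix.cons_val_one, Matrix.head_cons, Matrix.cons_val_two, Matrix.tail_cons, Matrix.smul_apply, Matrix.vecHead, Matrix.vecTail, Function.comp]
  have e21 : Mmat 1 2 1 = (2 : ℝ)/15 := by
    norm_num [Mmat, M1, Matrix.cons_val_zero, Matrix.cons_val_one, Matrix.head_cons, Matrix.cons_val_two, Matrix.tail_cons, Matrix.smul_apply, Matrix.vecHead, Matrix.vecTail, Function.comp]
  have e22 : Mmat 1 2 2 = (2 : ℝ)/15 := by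
    norm_num [Mmat, M1, Matrix.cons_val_zero, Matrix.cons_val_one, Matrix.head_cons, Matrix.cons_val_two, Matrix.tail_cons, Matrix.smul_apply, Matrix.vecHead, Matrix.vecTail, Function.comp]
  refine ⟨?_, ?_, ?_⟩
  · rw [cw_append, e00, e10, e20]; ring
  · rw [cw_append, e01, e11, e21]; ring
  · rw [cw_append, e02, e12, e22]; ring

lemma cw2 (w : List (Fin 3)) :
    cw (w ++ [2]) 0 = (2 * cw w 0 - cw w 1) / 15 ∧
    cw (w ++ [2]) 1 = (- cw w 0 + 2 * cw w 1) / 15 ∧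
    cw (w ++ [2]) 2 = (2 * cw w 0 + 2 * cw w 1 + 9 * cw w 2) / 15 := by
  have e00 : Mmat 2 0 0 = (2 : ℝ)/15 := by
    norm_num [Mmat, M2, Matrix.cons_val_zero, Matrix.cons_val_one, Matrix.head_cons, Matrix.cons_val_two, Matrix.tail_cons, Matrix.smul_apply, Matrix.vecHead, Matrix.vecTail, Function.comp]
  have e01 : Mmat 2 0 1 = ((-1 : ℝ))/15 := by
    norm_num [Mmat, M2, Matrix.cons_val_zero, Matrix.cons_val_one, Matrix.head_cons, Matrix.cons_val_two, Matrix.tail_cons, Matrix.smul_apply, Matrix.vecHead, Matrix.vecTail, Function.comp]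
  have e02 : Mmat 2 0 2 = (2 : ℝ)/15 := by
    norm_num [Mmat, M2, Matrix.cons_val_zero, Matrix.cons_val_one, Matrix.head_cons, Matrix.cons_val_two, Matrix.tail_cons, Matrix.smul_apply, Matrix.vecHead, Matrix.vecTail, Function.comp]
  have e10 : Mmat 2 1 0 = ((-1 : ℝ))/15 := by
    norm_num [Mmat, M2, Matrix.cons_val_zero, Matrix.cons_val_one, Matrix.head_cons, Matrix.cons_val_two, Matrix.tail_cons, Matrix.smul_apply, Matrix.vecHead, Matrix.vecTail, Function.comp]
  have e11 : Mmat 2 1 1 = (2 : ℝ)/15 := by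
    norm_num [Mmat, M2, Matrix.cons_val_zero, Matrix.cons_val_one, Matrix.head_cons, Matrix.cons_val_two, Matrix.tail_cons, Matrix.smul_apply, Matrix.vecHead, Matrix.vecTail, Function.comp]
  have e12 : Mmat 2 1 2 = (2 : ℝ)/15 := by
    norm_num [Mmat, M2, Matrix.cons_val_zero, Matrix.cons_val_one, Matrix.head_cons, Matrix.cons_val_two, Matrix.tail_cons, Matrix.smul_apply, Matrix.vecHead, Matrix.vecTail, Function.comp]
  have e20 : Mmat 2 2 0 = (0 : ℝ)/15 := by
    norm_num [Mmat, M2, Matrix.cons_val_zero, Matrix.cons_val_one, Matrix.head_cons, Matrix.cons_val_two, Matrix.tail_cons, Matrix.smul_apply, Matrix.vecHead, Matrix.vecTail, Function.comp]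
  have e21 : Mmat 2 2 1 = (0 : ℝ)/15 := by
    norm_num [Mmat, M2, Matrix.cons_val_zero, Matrix.cons_val_one, Matrix.head_cons, Matrix.cons_val_two, Matrix.tail_cons, Matrix.smul_apply, Matrix.vecHead, Matrix.vecTail, Function.comp]
  have e22 : Mmat 2 2 2 = (9 : ℝ)/15 := by
    norm_num [Mmat, M2, Matrix.cons_val_zero, Matrix.cons_val_one, Matrix.head_cons, Matrix.cons_val_two, Matrix.tail_cons, Matrix.smul_apply, Matrix.vecHead, Matrix.vecTail, Function.comp]
  refine ⟨?_, ?_, ?_⟩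
  · rw [cw_append, e00, e10, e20]; ring
  · rw [cw_append, e01, e11, e21]; ring
  · rw [cw_append, e02, e12, e22]; ring

lemma step (w : List (Fin 3)) (j : Fin 3) :
    (cw (w ++ [j]) 0 * cw (w ++ [j]) 1 + cw (w ++ [j]) 1 * cw (w ++ [j]) 2 +
      cw (w ++ [j]) 2 * cw (w ++ [j]) 0 =
      (cw w 0 * cw w 1 + cw w 1 * cw w 2 + cw w 2 * cw w 0) / 25) ∧
    Sw (w ++ [j]) = (Sw w + 2 * cw w j) / 5 := by
  rcases fin3_cases j with rfl | rfl | rfl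
  · obtain ⟨h0, h1, h2⟩ := cw0 w
    rw [sw_eq (w ++ _), sw_eq w, h0, h1, h2]
    constructor <;> ring
  · obtain ⟨h0, h1, h2⟩ := cw1 w
    rw [sw_eq (w ++ _), sw_eq w, h0, h1, h2]
    constructor <;> ring
  · obtain ⟨h0, h1, h2⟩ := cw2 w
    rw [sw_eq (w ++ _), sw_eq w, h0, h1, h2]
    constructor <;> ring

lemma cw_nil (j : Fin 3) : cw ([] : List (Fin 3)) j = 1 := by
  rcases fin3_cases j with rfl | rfl | rfl <;>
    norm_num [cw, Mword, Matrix.one_apply, Fin.sum_univ_three]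

lemma invariant (w : List (Fin 3)) :
    0 < cw w 0 * cw w 1 + cw w 1 * cw w 2 + cw w 2 * cw w 0 ∧ 0 < Sw w := by
  induction w using List.reverseRecOn with
  | nil =>
    rw [sw_eq, cw_nil, cw_nil, cw_nil]; norm_num
  | append_singleton w j ih =>
    obtain ⟨hq, hS⟩ := ih
    obtain ⟨e1, e2⟩ := step w j
    have hSe := sw_eq w
    have hj : 0 < Sw w + 2 * cw w j := by
      rcases fin3_cases j with rfl | rfl | rfl
      · nlinarith [sq_nonneg (cw w 1 - cw w 2), sq_nonneg (cw w 1 + cw w 2)]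
      · nlinarith [sq_nonneg (cw w 0 - cw w 2), sq_nonneg (cw w 0 + cw w 2)]
      · nlinarith [sq_nonneg (cw w 0 - cw w 1), sq_nonneg (cw w 0 + cw w 1)]
    constructor
    · rw [e1]; linarith
    · rw [e2]; linarith

lemma dot_eq (w : List (Fin 3)) :
    (![1, 1, 1] : Fin 3 → ℝ) ⬝ᵥ (Mword w *ᵥ ![2, 2, 2]) = 2 * Sw w := by
  simp [dotProduct, mulVec, Sw, cw, Fin.sum_univ_three]
  ring

/-- For every finite word `w` over `{0,1,2}` and every `j`:
`(1/5)(b_j^(w) - 1/3) = (1/4)((1,1,1) M_{wj} (2,2,2)ᵀ / ((1,1,1) M_w (2,2,2)ᵀ) - 1/3)`,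
where `wj` is `w` with the letter `j` appended; both denominators are positive. -/
theorem stmt_13 (w : List (Fin 3)) (j : Fin 3) :
    0 < (![1, 1, 1] : Fin 3 → ℝ) ⬝ᵥ (Mword w *ᵥ ![2, 2, 2]) ∧
    0 < (![1, 1, 1] : Fin 3 → ℝ) ⬝ᵥ (Mword (w ++ [j]) *ᵥ ![2, 2, 2]) ∧
    (1 / 5) * (bwt w j - 1 / 3) =
      (1 / 4) * ((![1, 1, 1] : Fin 3 → ℝ) ⬝ᵥ (Mword (w ++ [j]) *ᵥ ![2, 2, 2]) /
        ((![1, 1, 1] : Fin 3 → ℝ) ⬝ᵥ (Mword w *ᵥ ![2, 2, 2])) - 1 / 3) := by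
  have hS := (invariant w).2
  have hS' := (invariant (w ++ [j])).2
  have e2 := (step w j).2
  rw [dot_eq, dot_eq, e2]
  refine ⟨by linarith, by linarith, ?_⟩
  have hSne : Sw w ≠ 0 := ne_of_gt hS
  rw [bwt]
  field_simp
  ring
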